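/- Let B be an r×r real symmetric positive definite matrix, let U ∈ St(r,p₁) with orthonormal completion U⊥ and V ∈ St(r,p₂) with orthonormal completion V⊥. Let Ω ∈ ℝ^{r×r} be skew-symmetric, θ_B ∈ ℝ^{r×r} symmetric, D₁ ∈ ℝ^{(p₁−r)×r}, D₂ ∈ ℝ^{(p₂−r)×r}, and set θ_U := U⊥D₁ + UΩ, θ_V := V⊥D₂ − VΩ, and ξ := θ_U B Vᵀ + U θ_B Vᵀ + U B θ_Vᵀ. Then, with g := ‖D₁‖_F² + ‖D₂‖_F² + 2‖Ω‖_F² + tr(B⁻¹ θ_B B⁻¹ θ_B), it holds that (λmin(B))²·g ≤ ‖ξ‖_F² ≤ 2·(λmax(B))²·g. -/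

import Mathlib

open Matrix

/-- The smallest eigenvalue of a (Hermitian) real matrix; junk value `0` otherwise. -/
noncomputable def eigMin {n : ℕ} (M : Matrix (Fin n) (Fin n) ℝ) : ℝ := by
  classical exact if h : M.IsHermitian then ⨅ i, h.eigenvalues i else 0

/-- The largest eigenvalue of a (Hermitian) real matrix; junk value `0` otherwise. -/
noncomputable def eigMax {n : ℕ} (M : Matrix (Fin n) (Fin n) ℝ) : ℝ := by
  classical exact if h : M.IsHermitian then ⨆ i, h.eigenvalues i else 0

/-- The squared Frobenius norm `‖A‖_F² = tr(AᵀA)`. -/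
noncomputable def frobSq {m n : ℕ} (A : Matrix (Fin m) (Fin n) ℝ) : ℝ :=
  Matrix.trace (Aᵀ * A)

/-!
In the orthonormal frames `[U⊥ U]` and `[V V⊥]` the matrix `ξ` has the three blocks `D₁B`,
`ΩB + BΩ + θ_B` and `BD₂ᵀ`, and the middle block splits orthogonally into its skew part
`ΩB + BΩ` and its symmetric part `θ_B`. Diagonalising `B = Q diag(d) Qᵀ`, every term of `‖ξ‖_F²`
and of `g` becomes a sum of squared entries of `D₁Q`, `D₂Q`, `QᵀΩQ`, `Qᵀθ_BQ` with weights
`d_j²`, `(d_i + d_j)²`, `1` against `1`, `2`, `(d_i d_j)⁻¹`; each ratio of weights lies in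
`[λmin², 2λmax²]` because `λmin ≤ d_i ≤ λmax`.
-/

theorem Finset.mul_sum_le_sum_mul_of_le {ι : Type*} (s : Finset ι) {a w : ι → ℝ} {c : ℝ}
    (ha : ∀ i ∈ s, 0 ≤ a i) (hw : ∀ i ∈ s, c ≤ w i) :
    c * ∑ i ∈ s, a i ≤ ∑ i ∈ s, a i * w i := by
  rw [Finset.mul_sum]
  exact Finset.sum_le_sum fun i hi => by nlinarith [ha i hi, hw i hi]

theorem Finset.sum_mul_le_mul_sum_of_le {ι : Type*} (s : Finset ι) {a w : ι → ℝ} {C : ℝ}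
    (ha : ∀ i ∈ s, 0 ≤ a i) (hw : ∀ i ∈ s, w i ≤ C) :
    ∑ i ∈ s, a i * w i ≤ C * ∑ i ∈ s, a i := by
  rw [Finset.mul_sum]
  exact Finset.sum_le_sum fun i hi => by nlinarith [ha i hi, hw i hi]

section Frobenius

variable {m n k : ℕ}

theorem frobSq_eq_sum (A : Matrix (Fin m) (Fin n) ℝ) :
    frobSq A = ∑ p : Fin m × Fin n, A p.1 p.2 ^ 2 := by
  rw [Fintype.sum_prod_type, Finset.sum_comm]
  simp [frobSq, Matrix.trace, Matrix.mul_apply, sq]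

theorem frobSq_nonneg (A : Matrix (Fin m) (Fin n) ℝ) : 0 ≤ frobSq A := by
  rw [frobSq_eq_sum]; positivity

theorem frobSq_transpose (A : Matrix (Fin m) (Fin n) ℝ) : frobSq Aᵀ = frobSq A := by
  rw [frobSq, frobSq, transpose_transpose, Matrix.trace_mul_comm]

theorem frobSq_mul_left_of_transpose_mul_self {X : Matrix (Fin k) (Fin m) ℝ} (hX : Xᵀ * X = 1)
    (A : Matrix (Fin m) (Fin n) ℝ) : frobSq (X * A) = frobSq A := by
  rw [frobSq, frobSq, transpose_mul, Matrix.mul_assoc, ← Matrix.mul_assoc Xᵀ, hX,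
    Matrix.one_mul]

theorem frobSq_mul_transpose_of_transpose_mul_self {Y : Matrix (Fin k) (Fin n) ℝ}
    (hY : Yᵀ * Y = 1) (A : Matrix (Fin m) (Fin n) ℝ) : frobSq (A * Yᵀ) = frobSq A := by
  rw [← frobSq_transpose, transpose_mul, transpose_transpose,
    frobSq_mul_left_of_transpose_mul_self hY, frobSq_transpose]

theorem frobSq_mul_of_mul_transpose_self {Q : Matrix (Fin n) (Fin k) ℝ} (hQ : Q * Qᵀ = 1)
    (A : Matrix (Fin m) (Fin n) ℝ) : frobSq (A * Q) = frobSq A := by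
  have hQ' : Qᵀᵀ * Qᵀ = 1 := by rwa [transpose_transpose]
  simpa only [transpose_transpose] using frobSq_mul_transpose_of_transpose_mul_self hQ' A

theorem frobSq_sandwich {p q : ℕ} {X : Matrix (Fin p) (Fin m) ℝ} {Y : Matrix (Fin q) (Fin n) ℝ}
    (hX : Xᵀ * X = 1) (hY : Yᵀ * Y = 1) (A : Matrix (Fin m) (Fin n) ℝ) :
    frobSq (X * A * Yᵀ) = frobSq A := by
  rw [frobSq_mul_transpose_of_transpose_mul_self hY, frobSq_mul_left_of_transpose_mul_self hX]

theorem frobSq_add (A B : Matrix (Fin m) (Fin n) ℝ) :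
    frobSq (A + B) = frobSq A + 2 * trace (Aᵀ * B) + frobSq B := by
  have hBA : trace (Bᵀ * A) = trace (Aᵀ * B) := by
    rw [← trace_transpose, transpose_mul, transpose_transpose]
  simp only [frobSq, transpose_add, Matrix.add_mul, Matrix.mul_add, trace_add, hBA]
  ring

theorem frobSq_add_of_trace_eq_zero {A B : Matrix (Fin m) (Fin n) ℝ}
    (h : trace (Aᵀ * B) = 0) : frobSq (A + B) = frobSq A + frobSq B := by
  rw [frobSq_add, h]; ring

theorem trace_transpose_mul_sandwich {p q a b c e : ℕ} (X₁ : Matrix (Fin p) (Fin a) ℝ)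
    (M₁ : Matrix (Fin a) (Fin b) ℝ) (Y₁ : Matrix (Fin q) (Fin b) ℝ)
    (X₂ : Matrix (Fin p) (Fin c) ℝ) (M₂ : Matrix (Fin c) (Fin e) ℝ)
    (Y₂ : Matrix (Fin q) (Fin e) ℝ) :
    trace ((X₁ * M₁ * Y₁ᵀ)ᵀ * (X₂ * M₂ * Y₂ᵀ)) = trace (M₁ᵀ * (X₁ᵀ * X₂) * M₂ * (Y₂ᵀ * Y₁)) := by
  simp only [transpose_mul, transpose_transpose, Matrix.mul_assoc]
  rw [Matrix.trace_mul_comm]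
  simp only [Matrix.mul_assoc]

theorem frobSq_add_of_transpose_eq_neg_of_isSymm {K S : Matrix (Fin n) (Fin n) ℝ}
    (hK : Kᵀ = -K) (hS : S.IsSymm) : frobSq (K + S) = frobSq K + frobSq S := by
  refine frobSq_add_of_trace_eq_zero ?_
  have h : trace (K * S) = trace ((K * S)ᵀ) := (trace_transpose _).symm
  rw [transpose_mul, hS.eq, hK, Matrix.mul_neg, trace_neg, trace_mul_comm S K] at h
  rw [hK, Matrix.neg_mul, trace_neg]
  linarith

theorem frobSq_mul_diagonal (A : Matrix (Fin m) (Fin n) ℝ) (d : Fin n → ℝ) :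
    frobSq (A * diagonal d) = ∑ p : Fin m × Fin n, A p.1 p.2 ^ 2 * d p.2 ^ 2 := by
  simp only [frobSq_eq_sum, mul_diagonal, mul_pow]

theorem trace_diagonal_mul_mul_diagonal_mul (a : Fin n → ℝ)
    {T : Matrix (Fin n) (Fin n) ℝ} (hT : T.IsSymm) :
    trace (diagonal a * T * diagonal a * T) =
      ∑ p : Fin n × Fin n, T p.1 p.2 ^ 2 * (a p.1 * a p.2) := by
  have hX : diagonal a * T * diagonal a = of fun i j => a i * T i j * a j := by
    ext i j
    rw [mul_diagonal, diagonal_mul, of_apply]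
  rw [hX, Fintype.sum_prod_type]
  refine Finset.sum_congr rfl fun i _ => ?_
  rw [diag_apply, mul_apply]
  refine Finset.sum_congr rfl fun j _ => ?_
  rw [of_apply, ← hT.apply i j]
  ring

end Frobenius

theorem Matrix.IsHermitian.exists_eq_mul_diagonal_mul_transpose {n : Type*} [Fintype n]
    [DecidableEq n] {B : Matrix n n ℝ} (hB : B.IsHermitian) :
    ∃ Q : Matrix n n ℝ, Qᵀ * Q = 1 ∧ B = Q * diagonal hB.eigenvalues * Qᵀ := by
  refine ⟨hB.eigenvectorUnitary, ?_, ?_⟩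
  · simpa [Matrix.star_eq_conjTranspose] using
      (mem_unitaryGroup_iff').mp (hB.eigenvectorUnitary).2
  · simpa [Unitary.conjStarAlgAut_apply, Matrix.star_eq_conjTranspose] using hB.spectral_theorem

section Spectrum

variable {r : ℕ} {B : Matrix (Fin r) (Fin r) ℝ}

theorem eigMin_le_eigenvalues (hB : B.IsHermitian) (i : Fin r) :
    eigMin B ≤ hB.eigenvalues i := by
  rw [eigMin, dif_pos hB]
  exact ciInf_le (Set.finite_range _).bddBelow i

theorem eigenvalues_le_eigMax (hB : B.IsHermitian) (i : Fin r) :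
    hB.eigenvalues i ≤ eigMax B := by
  rw [eigMax, dif_pos hB]
  exact le_ciSup (Set.finite_range _).bddAbove i

theorem eigMin_nonneg (hB : B.PosSemidef) : 0 ≤ eigMin B := by
  rw [eigMin, dif_pos hB.1]
  exact Real.iInf_nonneg hB.eigenvalues_nonneg

theorem sq_eigMin_le_mul_eigenvalues (hB : B.PosSemidef) (i j : Fin r) :
    eigMin B ^ 2 ≤ hB.1.eigenvalues i * hB.1.eigenvalues j := by
  have := eigMin_le_eigenvalues hB.1 i
  have := eigMin_le_eigenvalues hB.1 j
  have := eigMin_nonneg hB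
  nlinarith

theorem mul_eigenvalues_le_sq_eigMax (hB : B.PosSemidef) (i j : Fin r) :
    hB.1.eigenvalues i * hB.1.eigenvalues j ≤ eigMax B ^ 2 := by
  have := eigenvalues_le_eigMax hB.1 i
  have := eigenvalues_le_eigMax hB.1 j
  have := hB.eigenvalues_nonneg i
  have := hB.eigenvalues_nonneg j
  nlinarith

end Spectrum

theorem Matrix.PosDef.exists_diagonalization {r : ℕ} {B : Matrix (Fin r) (Fin r) ℝ}
    (hB : B.PosDef) :
    ∃ (Q : Matrix (Fin r) (Fin r) ℝ) (d : Fin r → ℝ), Qᵀ * Q = 1 ∧ B = Q * diagonal d * Qᵀ ∧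
      (∀ i, 0 < d i) ∧ (∀ i j, eigMin B ^ 2 ≤ d i * d j) ∧ ∀ i j, d i * d j ≤ eigMax B ^ 2 := by
  obtain ⟨Q, hQ, hBQ⟩ := hB.1.exists_eq_mul_diagonal_mul_transpose
  exact ⟨Q, _, hQ, hBQ, hB.eigenvalues_pos, sq_eigMin_le_mul_eigenvalues hB.posSemidef,
    mul_eigenvalues_le_sq_eigMax hB.posSemidef⟩

section Diagonalized

variable {r : ℕ} {B Q : Matrix (Fin r) (Fin r) ℝ} {d : Fin r → ℝ} {c C : ℝ}

theorem transpose_mul_mul_cancel (hQ : Qᵀ * Q = 1) {n : ℕ} (A : Matrix (Fin r) (Fin n) ℝ) :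
    Qᵀ * (Q * A) = A := by
  rw [← Matrix.mul_assoc, hQ, Matrix.one_mul]

theorem trace_mul_mul_transpose (hQ : Qᵀ * Q = 1) (A : Matrix (Fin r) (Fin r) ℝ) :
    trace (Q * A * Qᵀ) = trace A := by
  rw [trace_mul_comm, ← Matrix.mul_assoc, hQ, Matrix.one_mul]

theorem mul_transpose_mul_mul_mul_transpose (hQ : Qᵀ * Q = 1) (A : Matrix (Fin r) (Fin r) ℝ) :
    Q * (Qᵀ * A * Q) * Qᵀ = A := by
  have hQ' : Q * Qᵀ = 1 := mul_eq_one_comm.mp hQ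
  simp only [← Matrix.mul_assoc, hQ', Matrix.one_mul]
  rw [Matrix.mul_assoc, hQ', Matrix.mul_one]

theorem frobSq_mul_bounds_of_eq_diagonal (hQ : Qᵀ * Q = 1) (hB : B = Q * diagonal d * Qᵀ)
    (hc : ∀ i, c ≤ d i * d i) (hC : ∀ i, d i * d i ≤ C) {m : ℕ} (D : Matrix (Fin m) (Fin r) ℝ) :
    c * frobSq D ≤ frobSq (D * B) ∧ frobSq (D * B) ≤ C * frobSq D := by
  have hDB : frobSq (D * B) = ∑ p : Fin m × Fin r, (D * Q) p.1 p.2 ^ 2 * (d p.2 * d p.2) := by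
    rw [hB, ← Matrix.mul_assoc, ← Matrix.mul_assoc,
      frobSq_mul_transpose_of_transpose_mul_self hQ, frobSq_mul_diagonal]
    simp only [sq]
  rw [hDB, ← frobSq_mul_of_mul_transpose_self (mul_eq_one_comm.mp hQ) D, frobSq_eq_sum]
  exact ⟨Finset.mul_sum_le_sum_mul_of_le _ (fun _ _ => sq_nonneg _) fun p _ => hc p.2,
    Finset.sum_mul_le_mul_sum_of_le _ (fun _ _ => sq_nonneg _) fun p _ => hC p.2⟩

theorem frobSq_mul_add_mul_bounds_of_eq_diagonal (hQ : Qᵀ * Q = 1)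
    (hB : B = Q * diagonal d * Qᵀ) (hc : ∀ i j, c ≤ d i * d j) (hC : ∀ i j, d i * d j ≤ C)
    (Ω : Matrix (Fin r) (Fin r) ℝ) :
    4 * c * frobSq Ω ≤ frobSq (Ω * B + B * Ω) ∧
      frobSq (Ω * B + B * Ω) ≤ 4 * C * frobSq Ω := by
  obtain ⟨W, rfl⟩ : ∃ W, Ω = Q * W * Qᵀ :=
    ⟨_, (mul_transpose_mul_mul_mul_transpose hQ Ω).symm⟩
  have hK : Q * W * Qᵀ * B + B * (Q * W * Qᵀ) =
      Q * (W * diagonal d + diagonal d * W) * Qᵀ := by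
    rw [hB]
    simp only [Matrix.mul_add, Matrix.add_mul, Matrix.mul_assoc, transpose_mul_mul_cancel hQ]
  have hKW : frobSq (W * diagonal d + diagonal d * W) =
      ∑ p : Fin r × Fin r, W p.1 p.2 ^ 2 * (d p.1 + d p.2) ^ 2 := by
    rw [frobSq_eq_sum]
    refine Finset.sum_congr rfl fun p _ => ?_
    rw [Matrix.add_apply, mul_diagonal, diagonal_mul]
    ring
  rw [hK, frobSq_sandwich hQ hQ, frobSq_sandwich hQ hQ, hKW, frobSq_eq_sum]
  constructor
  · refine Finset.mul_sum_le_sum_mul_of_le _ (fun _ _ => sq_nonneg _) fun p _ => ?_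
    nlinarith [hc p.1 p.1, hc p.1 p.2, hc p.2 p.2]
  · refine Finset.sum_mul_le_mul_sum_of_le _ (fun _ _ => sq_nonneg _) fun p _ => ?_
    nlinarith [hC p.1 p.1, hC p.1 p.2, hC p.2 p.2]

theorem trace_inv_mul_inv_mul_bounds_of_eq_diagonal (hQ : Qᵀ * Q = 1)
    (hB : B = Q * diagonal d * Qᵀ) (hd : ∀ i, 0 < d i) (hc : ∀ i j, c ≤ d i * d j)
    (hC : ∀ i j, d i * d j ≤ C) {θ : Matrix (Fin r) (Fin r) ℝ} (hθ : θ.IsSymm) :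
    c * trace (B⁻¹ * θ * B⁻¹ * θ) ≤ frobSq θ ∧ frobSq θ ≤ C * trace (B⁻¹ * θ * B⁻¹ * θ) := by
  obtain ⟨T, hT, rfl⟩ : ∃ T : Matrix (Fin r) (Fin r) ℝ, T.IsSymm ∧ θ = Q * T * Qᵀ :=
    ⟨Qᵀ * θ * Q, by simp only [IsSymm, transpose_mul, transpose_transpose, hθ.eq, Matrix.mul_assoc],
      (mul_transpose_mul_mul_mul_transpose hQ θ).symm⟩
  have hBinv : B⁻¹ = Q * diagonal d⁻¹ * Qᵀ := by
    have hdd : diagonal d * diagonal d⁻¹ = 1 := by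
      rw [diagonal_mul_diagonal, ← diagonal_one]
      exact congrArg diagonal (funext fun i => mul_inv_cancel₀ (hd i).ne')
    refine inv_eq_right_inv ?_
    rw [hB]
    simp only [Matrix.mul_assoc, transpose_mul_mul_cancel hQ]
    rw [← Matrix.mul_assoc (diagonal d), hdd, Matrix.one_mul, mul_eq_one_comm.mp hQ]
  set a : Fin r × Fin r → ℝ := fun p => T p.1 p.2 ^ 2 * (d⁻¹ p.1 * d⁻¹ p.2)
  have htr : trace (B⁻¹ * (Q * T * Qᵀ) * B⁻¹ * (Q * T * Qᵀ)) = ∑ p, a p := by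
    rw [← trace_diagonal_mul_mul_diagonal_mul _ hT,
      ← trace_mul_mul_transpose hQ (diagonal d⁻¹ * T * diagonal d⁻¹ * T), hBinv]
    simp only [Matrix.mul_assoc, transpose_mul_mul_cancel hQ]
  have hfrob : frobSq (Q * T * Qᵀ) = ∑ p, a p * (d p.1 * d p.2) := by
    rw [frobSq_sandwich hQ hQ, frobSq_eq_sum]
    refine Finset.sum_congr rfl fun p _ => ?_
    have := (hd p.1).ne'; have := (hd p.2).ne'
    simp only [a, Pi.inv_apply]
    field_simp
  have ha : ∀ p, 0 ≤ a p := fun p => by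
    have := hd p.1; have := hd p.2
    simp only [a, Pi.inv_apply]; positivity
  rw [htr, hfrob]
  exact ⟨Finset.mul_sum_le_sum_mul_of_le _ (fun p _ => ha p) fun p _ => hc p.1 p.2,
    Finset.sum_mul_le_mul_sum_of_le _ (fun p _ => ha p) fun p _ => hC p.1 p.2⟩

end Diagonalized

section Orthonormal

variable {p₁ p₂ k₁ k₂ r : ℕ}
  {U : Matrix (Fin p₁) (Fin r) ℝ} {Uperp : Matrix (Fin p₁) (Fin k₁) ℝ}
  {V : Matrix (Fin p₂) (Fin r) ℝ} {Vperp : Matrix (Fin p₂) (Fin k₂) ℝ}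

theorem frobSq_add_add_of_orthonormal (hU : Uᵀ * U = 1) (hUperp : Uperpᵀ * Uperp = 1)
    (hUUperp : Uᵀ * Uperp = 0) (hV : Vᵀ * V = 1) (hVperp : Vperpᵀ * Vperp = 1)
    (hVVperp : Vᵀ * Vperp = 0) (M₁ : Matrix (Fin k₁) (Fin r) ℝ) (M₂ : Matrix (Fin r) (Fin r) ℝ)
    (M₃ : Matrix (Fin r) (Fin k₂) ℝ) :
    frobSq (Uperp * M₁ * Vᵀ + U * M₂ * Vᵀ + U * M₃ * Vperpᵀ) =
      frobSq M₁ + frobSq M₂ + frobSq M₃ := by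
  have hUperpU : Uperpᵀ * U = 0 := by
    simpa using congrArg transpose hUUperp
  have hVperpV : Vperpᵀ * V = 0 := by
    simpa using congrArg transpose hVVperp
  rw [frobSq_add_of_trace_eq_zero, frobSq_add_of_trace_eq_zero, frobSq_sandwich hUperp hV,
    frobSq_sandwich hU hV, frobSq_sandwich hU hVperp]
  · rw [trace_transpose_mul_sandwich, hUperpU]
    simp
  · rw [transpose_add, Matrix.add_mul, trace_add, trace_transpose_mul_sandwich,
      trace_transpose_mul_sandwich, hVperpV]
    simp

end Orthonormal

/-- Spectrum bounds for the map `(θ_U, θ_B, θ_V) ↦ θ_UBVᵀ + Uθ_BVᵀ + UBθ_Vᵀ` on the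
horizontal space of the polar quotient geometry on fixed-rank matrices:
`λmin(B)²·g ≤ ‖ξ‖_F² ≤ 2λmax(B)²·g`. -/
theorem stmt14 {p₁ p₂ r : ℕ}
    (B : Matrix (Fin r) (Fin r) ℝ) (hB : B.PosDef)
    (U : Matrix (Fin p₁) (Fin r) ℝ) (Uperp : Matrix (Fin p₁) (Fin (p₁ - r)) ℝ)
    (hU : Uᵀ * U = 1) (hUperp : Uperpᵀ * Uperp = 1) (hUUperp : Uᵀ * Uperp = 0)
    (V : Matrix (Fin p₂) (Fin r) ℝ) (Vperp : Matrix (Fin p₂) (Fin (p₂ - r)) ℝ)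
    (hV : Vᵀ * V = 1) (hVperp : Vperpᵀ * Vperp = 1) (hVVperp : Vᵀ * Vperp = 0)
    (Ω : Matrix (Fin r) (Fin r) ℝ) (hΩ : Ωᵀ = -Ω)
    (θB : Matrix (Fin r) (Fin r) ℝ) (hθB : θB.IsSymm)
    (D₁ : Matrix (Fin (p₁ - r)) (Fin r) ℝ) (D₂ : Matrix (Fin (p₂ - r)) (Fin r) ℝ)
    (θU : Matrix (Fin p₁) (Fin r) ℝ) (hθU : θU = Uperp * D₁ + U * Ω)
    (θV : Matrix (Fin p₂) (Fin r) ℝ) (hθV : θV = Vperp * D₂ - V * Ω)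
    (ξ : Matrix (Fin p₁) (Fin p₂) ℝ) (hξ : ξ = θU * B * Vᵀ + U * θB * Vᵀ + U * B * θVᵀ)
    (g : ℝ)
    (hg : g = frobSq D₁ + frobSq D₂ + 2 * frobSq Ω + Matrix.trace (B⁻¹ * θB * B⁻¹ * θB)) :
    (eigMin B) ^ 2 * g ≤ frobSq ξ ∧ frobSq ξ ≤ 2 * (eigMax B) ^ 2 * g := by
  have hBt : Bᵀ = B := (isHermitian_iff_isSymm.mp hB.1).eq
  have hξ' : ξ = Uperp * (D₁ * B) * Vᵀ + U * (Ω * B + B * Ω + θB) * Vᵀ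
      + U * (B * D₂ᵀ) * Vperpᵀ := by
    rw [hξ, hθU, hθV]
    simp only [transpose_sub, transpose_mul, hΩ, Matrix.neg_mul,
      Matrix.add_mul, Matrix.mul_add, Matrix.mul_assoc, sub_neg_eq_add]
    abel
  have hK : (Ω * B + B * Ω)ᵀ = -(Ω * B + B * Ω) := by
    rw [transpose_add, transpose_mul, transpose_mul, hΩ, hBt, Matrix.neg_mul, Matrix.mul_neg,
      neg_add, add_comm]
  have hsplit : frobSq ξ = frobSq (D₁ * B) + (frobSq (Ω * B + B * Ω) + frobSq θB)
      + frobSq (D₂ * B) := by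
    rw [hξ', frobSq_add_add_of_orthonormal hU hUperp hUUperp hV hVperp hVVperp,
      frobSq_add_of_transpose_eq_neg_of_isSymm hK hθB, ← frobSq_transpose (B * D₂ᵀ),
      transpose_mul, transpose_transpose, hBt]
  obtain ⟨Q, d, hQ, hBQ, hd, hlo, hhi⟩ := hB.exists_diagonalization
  have hD₁ := frobSq_mul_bounds_of_eq_diagonal hQ hBQ (fun i => hlo i i) (fun i => hhi i i) D₁
  have hD₂ := frobSq_mul_bounds_of_eq_diagonal hQ hBQ (fun i => hlo i i) (fun i => hhi i i) D₂
  have hΩB := frobSq_mul_add_mul_bounds_of_eq_diagonal hQ hBQ hlo hhi Ω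
  have hθ := trace_inv_mul_inv_mul_bounds_of_eq_diagonal hQ hBQ hd hlo hhi hθB
  rw [hsplit, hg]
  constructor <;> linarith [mul_nonneg (sq_nonneg (eigMin B)) (frobSq_nonneg Ω),
    mul_nonneg (sq_nonneg (eigMax B)) (frobSq_nonneg D₁),
    mul_nonneg (sq_nonneg (eigMax B)) (frobSq_nonneg D₂), frobSq_nonneg θB]
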